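/- arXiv:2007.13909 — 5 statements merged into one kernel-verified Lean document; each statement's English description precedes it below -/
import Mathlib

section
/- Let f : ℝ → ℝ be continuous and let φ : [0,∞) → ℝ be a bounded C² solution of φ'' + f(φ) = 0 with φ' > 0 on (0,∞) and φ(y) → 1 as y → ∞. Then (1/2)·φ'(0)² = ∫_{φ(0)}^{1} f(s) ds. -/
open Set Filter Topology

/-! Multiplying the equation by `φ'` shows that the energy `½ φ'² + ∫_{φ 0}^{φ} f` is constant.
As `φ → 1`, the energy identity makes `φ'²` converge, so `φ'` converges as well (it is positive);
by the mean value theorem the limit of the derivative of a convergent function is `0`. -/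

theorem hasDerivAt_half_sq_add_integral_comp {f φ φ' : ℝ → ℝ} (hf : Continuous f) {c y : ℝ}
    (hφ : HasDerivAt φ (φ' y) y) (hφ' : HasDerivAt φ' (-f (φ y)) y) :
    HasDerivAt (fun t => (1/2) * φ' t ^ 2 + ∫ s in c..φ t, f s) 0 y := by
  have hprim : HasDerivAt (fun u => ∫ s in c..u, f s) (f (φ y)) (φ y) :=
    intervalIntegral.integral_hasDerivAt_right (hf.intervalIntegrable _ _)
      (hf.stronglyMeasurableAtFilter _ _) hf.continuousAt
  refine (((hφ'.pow 2).const_mul (1/2)).add (hprim.comp y hφ)).congr_deriv ?_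
  push_cast
  ring

theorem half_sq_add_integral_eq {f φ φ' : ℝ → ℝ} (hf : Continuous f) {a : ℝ}
    (hφ : ∀ y ∈ Ici a, HasDerivAt φ (φ' y) y)
    (hφ' : ∀ y ∈ Ici a, HasDerivAt φ' (-f (φ y)) y) {y : ℝ} (hy : a ≤ y) :
    (1/2) * φ' y ^ 2 + ∫ s in φ a..φ y, f s = (1/2) * φ' a ^ 2 := by
  have hE := fun x (hx : x ∈ Ici a) =>
    hasDerivAt_half_sq_add_integral_comp (c := φ a) hf (hφ x hx) (hφ' x hx)
  have := constant_of_has_deriv_right_zero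
    (fun x hx => (hE x hx.1).continuousAt.continuousWithinAt)
    (fun x hx => (hE x hx.1).hasDerivWithinAt) y ⟨hy, le_rfl⟩
  simpa using this

theorem eq_zero_of_tendsto_deriv_of_tendsto {g g' : ℝ → ℝ} {a c l : ℝ}
    (hg : ∀ y ∈ Ici a, HasDerivAt g (g' y) y) (hgc : Tendsto g atTop (𝓝 c))
    (hg' : Tendsto g' atTop (𝓝 l)) : l = 0 := by
  have hmvt : ∀ y, ∃ ξ ∈ Ioo (max a y) (max a y + 1), g' ξ = g (max a y + 1) - g (max a y) := by
    intro y
    obtain ⟨ξ, hξ, heq⟩ := exists_hasDerivAt_eq_slope g g' (lt_add_one (max a y))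
      (fun x hx => (hg x (le_trans (le_max_left a y) hx.1)).continuousAt.continuousWithinAt)
      (fun x hx => hg x (le_trans (le_max_left a y) hx.1.le))
    exact ⟨ξ, hξ, by simpa using heq⟩
  choose ξ hξ heq using hmvt
  have hmax : Tendsto (fun y => max a y) atTop atTop :=
    tendsto_atTop_mono (le_max_right a) tendsto_id
  have hξ_top : Tendsto ξ atTop atTop :=
    tendsto_atTop_mono (fun y => (le_max_right a y).trans (hξ y).1.le) tendsto_id
  have hdiff : Tendsto (fun y => g (max a y + 1) - g (max a y)) atTop (𝓝 (c - c)) :=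
    (hgc.comp (tendsto_atTop_add_const_right _ 1 hmax)).sub (hgc.comp hmax)
  rw [sub_self] at hdiff
  exact tendsto_nhds_unique (hg'.comp hξ_top) (hdiff.congr fun y => (heq y).symm)

theorem stmt1_general (f φ φ' : ℝ → ℝ) (hf : Continuous f)
    (hφ : ∀ y ∈ Ici (0:ℝ), HasDerivAt φ (φ' y) y)
    (hφ' : ∀ y ∈ Ici (0:ℝ), HasDerivAt φ' (-f (φ y)) y)
    (hmono : ∀ y ∈ Ioi (0:ℝ), 0 < φ' y)
    (hlim : Tendsto φ atTop (nhds 1)) :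
    (1/2) * (φ' 0)^2 = ∫ s in (φ 0)..1, f s := by
  set L := φ' 0 ^ 2 - 2 * ∫ s in φ 0..1, f s
  have hprim : Continuous fun u => ∫ s in φ 0..u, f s :=
    intervalIntegral.continuous_primitive (fun _ _ => hf.intervalIntegrable _ _) _
  have hsq : Tendsto (fun y => φ' y ^ 2) atTop (𝓝 L) := by
    refine (tendsto_const_nhds.sub (((hprim.tendsto 1).comp hlim).const_mul 2)).congr' ?_
    filter_upwards [eventually_ge_atTop 0] with y hy
    have := half_sq_add_integral_eq hf hφ hφ' hy
    simp only [Function.comp_apply]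
    linarith
  have hL_nonneg : 0 ≤ L := ge_of_tendsto' hsq fun y => sq_nonneg _
  have hderiv : Tendsto φ' atTop (𝓝 (Real.sqrt L)) := by
    refine ((Real.continuous_sqrt.tendsto L).comp hsq).congr' ?_
    filter_upwards [eventually_gt_atTop 0] with y hy
    exact Real.sqrt_sq (hmono y hy).le
  have hL : L = 0 := (Real.sqrt_eq_zero hL_nonneg).mp
    (eq_zero_of_tendsto_deriv_of_tendsto hφ hlim hderiv)
  linarith

theorem stmt1 (f φ φ' : ℝ → ℝ) (hf : Continuous f)
    (hφ : ∀ y ∈ Ici (0:ℝ), HasDerivAt φ (φ' y) y)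
    (hφ' : ∀ y ∈ Ici (0:ℝ), HasDerivAt φ' (-f (φ y)) y)
    (hbdd : ∃ M, ∀ y ∈ Ici (0:ℝ), |φ y| ≤ M)
    (hmono : ∀ y ∈ Ioi (0:ℝ), 0 < φ' y)
    (hlim : Tendsto φ atTop (nhds 1)) :
    (1/2) * (φ' 0)^2 = ∫ s in (φ 0)..1, f s :=
  stmt1_general f φ φ' hf hφ hφ' hmono hlim
end

section
/- Let f be a continuous function with f(0) = 0, f < 0 on (0,θ), f > 0 on (θ,1), and let ϑ ∈ (θ,1) satisfy ∫_0^ϑ f(r) dr = 0 with ∫_0^s f(r) dr < 0 for s ∈ (0,ϑ). Fix δ ∈ (0, 1-ϑ) and let φ̊ solve φ̊'' + f(φ̊) = 0 with φ̊(0) = ϑ + δ, φ̊'(0) = 0. Then φ̊ is strictly decreasing on (0,∞) as long as it is positive, and there exists K̊ > 0 with φ̊(K̊) = 0. -/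
open Set Filter Topology

/-! The energy identity `φ' y ^ 2 = 2 ∫_{φ y}^{φ 0} f`, with `φ 0 = ϑ + δ`, has a positive
right-hand side whenever `0 ≤ φ y < ϑ + δ`, by the choice of `ϑ`. Since `φ'' 0 = -f (ϑ + δ) < 0`,
`φ'` is negative just after `0`, and it has no first zero while `φ` stays positive, because `φ` has
then dropped below `ϑ + δ`. If `φ` never vanished, `φ y` would stay in `[0, φ 1]` for `y ≥ 1`, where
the right-hand side is bounded below; so `φ' ≤ -c < 0` there and `φ` would become negative. -/

theorem eventually_lt_nhdsGT_of_hasDerivAt_neg {g : ℝ → ℝ} {g' a : ℝ} (hg : HasDerivAt g g' a)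
    (hg' : g' < 0) : ∀ᶠ x in 𝓝[>] a, g x < g a := by
  have hslope : Tendsto (slope g a) (𝓝[>] a) (𝓝 g') :=
    (hasDerivAt_iff_tendsto_slope.1 hg).mono_left (nhdsWithin_mono _ fun x hx => ne_of_gt hx)
  filter_upwards [hslope.eventually_lt_const hg', self_mem_nhdsWithin] with x hs hx
  rw [slope_def_field, div_lt_iff₀ (sub_pos.2 hx), zero_mul] at hs
  linarith

theorem forall_neg_of_ne_zero_at_first_zero {g : ℝ → ℝ} {a b : ℝ} (hg : ContinuousOn g (Ioc a b))
    (hstart : ∀ᶠ x in 𝓝[>] a, g x < 0)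
    (hne : ∀ T ∈ Ioc a b, (∀ x ∈ Ioo a T, g x < 0) → g T ≠ 0) :
    ∀ x ∈ Ioc a b, g x < 0 := by
  obtain ⟨ε, hε, hεneg⟩ := mem_nhdsGT_iff_exists_Ioo_subset.1 hstart
  by_contra! ⟨x₀, hx₀, hgx₀⟩
  have hεx₀ : ε ≤ x₀ := not_lt.1 fun h => (hεneg ⟨hx₀.1, h⟩ : g x₀ < 0).not_ge hgx₀
  set bad := Icc ε b ∩ g ⁻¹' Ici 0
  have hbad : IsClosed bad :=
    (hg.mono fun x hx => ⟨hε.trans_le hx.1, hx.2⟩).preimage_isClosed_of_isClosed isClosed_Icc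
      isClosed_Ici
  have hx₀bad : x₀ ∈ bad := ⟨⟨hεx₀, hx₀.2⟩, hgx₀⟩
  have hbdd : BddBelow bad := ⟨ε, fun x hx => hx.1.1⟩
  obtain ⟨⟨hεT, hTb⟩, hgT⟩ := hbad.csInf_mem ⟨x₀, hx₀bad⟩ hbdd
  set T := sInf bad
  have haT : a < T := hε.trans_le hεT
  have hbefore : ∀ x ∈ Ioo a T, g x < 0 := by
    intro x hx
    rcases lt_or_ge x ε with h | h
    · exact hεneg ⟨hx.1, h⟩
    · exact lt_of_not_ge fun hgx => hx.2.not_ge (csInf_le hbdd ⟨⟨h, hx.2.le.trans hTb⟩, hgx⟩)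
  have hgT_le : g T ≤ 0 :=
    ContinuousWithinAt.closure_le (s := Ioo a T)
      (by rw [closure_Ioo haT.ne]; exact ⟨haT.le, le_rfl⟩)
      ((hg T ⟨haT, hTb⟩).mono fun x hx => ⟨hx.1, hx.2.le.trans hTb⟩) continuousWithinAt_const
      fun x hx => (hbefore x hx).le
  exact hne T ⟨haT, hTb⟩ hbefore (le_antisymm hgT_le hgT)

theorem strictAntiOn_Icc_of_hasDerivAt_neg {g g' : ℝ → ℝ} {a b : ℝ}
    (hg : ∀ y ∈ Icc a b, HasDerivAt g (g' y) y) (hneg : ∀ y ∈ Ioo a b, g' y < 0) :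
    StrictAntiOn g (Icc a b) :=
  strictAntiOn_of_hasDerivWithinAt_neg (convex_Icc a b)
    (fun y hy => (hg y hy).continuousAt.continuousWithinAt)
    (fun y hy => by
      rw [interior_Icc] at hy ⊢
      exact (hg y (Ioo_subset_Icc_self hy)).hasDerivWithinAt)
    (by rw [interior_Icc]; exact hneg)

theorem exists_nonpos_of_hasDerivAt_le_neg {g g' : ℝ → ℝ} {a c : ℝ} (hc : 0 < c)
    (hg : ∀ y ∈ Ici a, HasDerivAt g (g' y) y) (hg' : ∀ y ∈ Ici a, g' y ≤ -c) :
    ∃ y, a ≤ y ∧ g y ≤ 0 := by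
  rcases le_or_gt (g a) 0 with ha | ha
  · exact ⟨a, le_rfl, ha⟩
  set Y := a + g a / c
  have haY : a < Y := lt_add_of_pos_right a (div_pos ha hc)
  obtain ⟨ξ, hξ, hslope⟩ := exists_hasDerivAt_eq_slope g g' haY
    (fun y hy => (hg y hy.1).continuousAt.continuousWithinAt) (fun y hy => hg y hy.1.le)
  have hYa : Y - a = g a / c := add_sub_cancel_left a _
  have : g Y - g a ≤ -c * (g a / c) := by
    rw [← hYa, ← div_le_iff₀ (sub_pos.2 haY), ← hslope]
    exact hg' ξ hξ.1.le
  refine ⟨Y, haY.le, ?_⟩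
  rw [neg_mul, mul_div_cancel₀ _ hc.ne'] at this
  linarith

theorem sq_deriv_eq_sq_add_integral {f φ φ' : ℝ → ℝ} (hf : Continuous f) {a : ℝ}
    (hφ : ∀ y ∈ Ici a, HasDerivAt φ (φ' y) y) (hφ' : ∀ y ∈ Ici a, HasDerivAt φ' (-f (φ y)) y)
    {y : ℝ} (hy : a ≤ y) : φ' y ^ 2 = φ' a ^ 2 + 2 * ∫ r in φ y..φ a, f r := by
  set E : ℝ → ℝ := fun z => φ' z ^ 2 + 2 * ∫ r in (0 : ℝ)..φ z, f r
  have hE : ∀ z ∈ Ici a, HasDerivAt E 0 z := by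
    intro z hz
    have hF := (hf.integral_hasStrictDerivAt 0 (φ z)).hasDerivAt.comp z (hφ z hz)
    exact (((hφ' z hz).fun_pow 2).add (hF.const_mul 2)).congr_deriv (by ring)
  have hconst := constant_of_has_deriv_right_zero (b := y)
    (fun z hz => (hE z hz.1).continuousAt.continuousWithinAt)
    (fun z hz => (hE z hz.1).hasDerivWithinAt) y ⟨hy, le_rfl⟩
  have hsub := intervalIntegral.integral_interval_sub_left
    (hf.intervalIntegrable (μ := MeasureTheory.volume) 0 (φ a)) (hf.intervalIntegrable 0 (φ y))
  change φ' y ^ 2 + 2 * (∫ r in (0 : ℝ)..φ y, f r) = φ' a ^ 2 + 2 * ∫ r in (0 : ℝ)..φ a, f r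
    at hconst
  linarith

theorem integral_pos_of_mem_Ico {f : ℝ → ℝ} {θ ϑ b : ℝ} (hf : Continuous f)
    (hpos : ∀ s ∈ Ioo θ b, 0 < f s) (hθϑ : θ < ϑ) (hϑb : ϑ < b)
    (hϑint : ∫ r in (0 : ℝ)..ϑ, f r = 0) (hϑneg : ∀ s ∈ Ioo 0 ϑ, ∫ r in (0 : ℝ)..s, f r ≤ 0) :
    ∀ s ∈ Ico 0 b, 0 < ∫ r in s..b, f r := by
  have htail : ∀ s, θ ≤ s → s < b → 0 < ∫ r in s..b, f r := fun s hθs hsb =>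
    intervalIntegral.intervalIntegral_pos_of_pos_on (hf.intervalIntegrable _ _)
      (fun x hx => hpos x ⟨hθs.trans_lt hx.1, hx.2⟩) hsb
  rintro s ⟨hs0, hsb⟩
  rcases lt_or_ge s ϑ with hsϑ | hϑs
  · have hhead : ∫ r in (0 : ℝ)..s, f r ≤ 0 := by
      rcases hs0.eq_or_lt with rfl | hs0
      · simp
      · exact hϑneg s ⟨hs0, hsϑ⟩
    have hsplit := intervalIntegral.integral_add_adjacent_intervals
      (hf.intervalIntegrable (μ := MeasureTheory.volume) 0 ϑ) (hf.intervalIntegrable ϑ b)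
    have hsub := intervalIntegral.integral_interval_sub_left
      (hf.intervalIntegrable (μ := MeasureTheory.volume) 0 b) (hf.intervalIntegrable 0 s)
    linarith [htail ϑ hθϑ.le hϑb]
  · exact htail s (hθϑ.le.trans hϑs) hsb

section

variable {f φ φ' : ℝ → ℝ}

theorem deriv_neg_of_pos_on_Ioc (hf : Continuous f) (hφ : ∀ y ∈ Ici 0, HasDerivAt φ (φ' y) y)
    (hφ' : ∀ y ∈ Ici 0, HasDerivAt φ' (-f (φ y)) y) (hinit' : φ' 0 = 0) (hfφ0 : 0 < f (φ 0))
    (hG : ∀ s ∈ Ico 0 (φ 0), 0 < ∫ r in s..φ 0, f r) {b : ℝ} (hb : ∀ z ∈ Ioc 0 b, 0 < φ z) :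
    ∀ y ∈ Ioc 0 b, φ' y < 0 := by
  refine forall_neg_of_ne_zero_at_first_zero
    (fun y hy => (hφ' y hy.1.le).continuousAt.continuousWithinAt) ?_ ?_
  · simpa only [hinit'] using
      eventually_lt_nhdsGT_of_hasDerivAt_neg (hφ' 0 self_mem_Ici) (neg_neg_of_pos hfφ0)
  · intro T hT hbefore hφ'T
    have hφT : φ T < φ 0 := strictAntiOn_Icc_of_hasDerivAt_neg (fun y hy => hφ y hy.1) hbefore
      ⟨le_rfl, hT.1.le⟩ ⟨hT.1.le, le_rfl⟩ hT.1
    have henergy := sq_deriv_eq_sq_add_integral hf hφ hφ' hT.1.le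
    rw [hinit', hφ'T] at henergy
    linarith [hG (φ T) ⟨(hb T hT).le, hφT⟩]

theorem strictAntiOn_Icc_of_pos_on_Ioc (hf : Continuous f)
    (hφ : ∀ y ∈ Ici 0, HasDerivAt φ (φ' y) y) (hφ' : ∀ y ∈ Ici 0, HasDerivAt φ' (-f (φ y)) y)
    (hinit' : φ' 0 = 0) (hfφ0 : 0 < f (φ 0)) (hG : ∀ s ∈ Ico 0 (φ 0), 0 < ∫ r in s..φ 0, f r)
    {b : ℝ} (hb : ∀ z ∈ Ioc 0 b, 0 < φ z) : StrictAntiOn φ (Icc 0 b) :=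
  strictAntiOn_Icc_of_hasDerivAt_neg (fun y hy => hφ y hy.1) fun y hy =>
    deriv_neg_of_pos_on_Ioc hf hφ hφ' hinit' hfφ0 hG hb y (Ioo_subset_Ioc_self hy)

theorem exists_pos_nonpos (hf : Continuous f)
    (hφ : ∀ y ∈ Ici 0, HasDerivAt φ (φ' y) y) (hφ' : ∀ y ∈ Ici 0, HasDerivAt φ' (-f (φ y)) y)
    (hinit' : φ' 0 = 0) (hfφ0 : 0 < f (φ 0)) (hG : ∀ s ∈ Ico 0 (φ 0), 0 < ∫ r in s..φ 0, f r) :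
    ∃ y, 0 < y ∧ φ y ≤ 0 := by
  by_contra! hpos
  have hpos_Ioc : ∀ b, ∀ z ∈ Ioc 0 b, 0 < φ z := fun _ z hz => hpos z hz.1
  have hanti := fun b => strictAntiOn_Icc_of_pos_on_Ioc hf hφ hφ' hinit' hfφ0 hG (hpos_Ioc b)
  have hφ1 : φ 1 < φ 0 := hanti 1 ⟨le_rfl, zero_le_one⟩ ⟨zero_le_one, le_rfl⟩ one_pos
  have hGcont : Continuous fun s => ∫ r in s..φ 0, f r :=
    (intervalIntegral.continuous_primitive (fun a b => hf.intervalIntegrable a b)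
      (φ 0)).neg.congr fun s => (intervalIntegral.integral_symm (φ 0) s).symm
  obtain ⟨s₀, hs₀, hmin⟩ := isCompact_Icc.exists_isMinOn
    (nonempty_Icc.2 (hpos 1 one_pos).le) hGcont.continuousOn
  have hm : 0 < ∫ r in s₀..φ 0, f r := hG s₀ ⟨hs₀.1, hs₀.2.trans_lt hφ1⟩
  have hslope : ∀ y ∈ Ici 1, φ' y ≤ -√(2 * ∫ r in s₀..φ 0, f r) := by
    intro y hy
    have hy0 : 0 < y := one_pos.trans_le hy
    have hφy : φ y ∈ Icc 0 (φ 1) :=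
      ⟨(hpos y hy0).le, (hanti y).antitoneOn ⟨zero_le_one, hy⟩ ⟨hy0.le, le_rfl⟩ hy⟩
    have hsq : 2 * ∫ r in s₀..φ 0, f r ≤ φ' y ^ 2 := by
      have hmin_y : (∫ r in s₀..φ 0, f r) ≤ ∫ r in φ y..φ 0, f r := hmin hφy
      rw [sq_deriv_eq_sq_add_integral hf hφ hφ' hy0.le, hinit', zero_pow two_ne_zero, zero_add]
      linarith
    have hroot := Real.sqrt_le_sqrt hsq
    rw [Real.sqrt_sq_eq_abs, abs_of_neg
      (deriv_neg_of_pos_on_Ioc hf hφ hφ' hinit' hfφ0 hG (hpos_Ioc y) y ⟨hy0, le_rfl⟩)] at hroot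
    linarith
  obtain ⟨Y, hY, hφY⟩ := exists_nonpos_of_hasDerivAt_le_neg (Real.sqrt_pos.2 (by linarith))
    (fun y hy => hφ y (mem_Ici.2 (zero_le_one.trans hy))) hslope
  exact (hpos Y (one_pos.trans_le hY)).not_ge hφY

theorem exists_pos_eq_zero (hf : Continuous f)
    (hφ : ∀ y ∈ Ici 0, HasDerivAt φ (φ' y) y) (hφ' : ∀ y ∈ Ici 0, HasDerivAt φ' (-f (φ y)) y)
    (hinit' : φ' 0 = 0) (hfφ0 : 0 < f (φ 0)) (hG : ∀ s ∈ Ico 0 (φ 0), 0 < ∫ r in s..φ 0, f r)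
    (hφ0 : 0 < φ 0) : ∃ K, 0 < K ∧ φ K = 0 := by
  obtain ⟨y, hy, hφy⟩ := exists_pos_nonpos hf hφ hφ' hinit' hfφ0 hG
  obtain ⟨K, hK, hφK⟩ := intermediate_value_Icc' hy.le
    (fun z hz => (hφ z hz.1).continuousAt.continuousWithinAt) ⟨hφy, hφ0.le⟩
  exact ⟨K, lt_of_le_of_ne hK.1 (by rintro rfl; linarith), hφK⟩

end

theorem stmt5_general (f : ℝ → ℝ) (θ ϑ δ : ℝ) (hf : Continuous f)
    (hθ : θ ∈ Ioo (0:ℝ) 1)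
    (hpos : ∀ s ∈ Ioo θ 1, 0 < f s)
    (hϑ : ϑ ∈ Ioo θ 1)
    (hϑint : (∫ r in (0:ℝ)..ϑ, f r) = 0)
    (hϑneg : ∀ s ∈ Ioo (0:ℝ) ϑ, (∫ r in (0:ℝ)..s, f r) < 0)
    (hδ : δ ∈ Ioo 0 (1 - ϑ))
    (φ φ' : ℝ → ℝ)
    (hφ : ∀ y ∈ Ici (0:ℝ), HasDerivAt φ (φ' y) y)
    (hφ' : ∀ y ∈ Ici (0:ℝ), HasDerivAt φ' (-f (φ y)) y)
    (hinit : φ 0 = ϑ + δ) (hinit' : φ' 0 = 0) :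
    (∀ y₁ y₂ : ℝ, 0 < y₁ → y₁ < y₂ → (∀ z ∈ Ioc (0:ℝ) y₂, 0 < φ z) → φ y₂ < φ y₁) ∧
    ∃ K : ℝ, 0 < K ∧ φ K = 0 := by
  obtain ⟨hθϑ, -⟩ := hϑ
  obtain ⟨hδ0, hδ1⟩ := hδ
  have hφ0 : 0 < φ 0 := by rw [hinit]; linarith [hθ.1]
  have hfφ0 : 0 < f (φ 0) := hpos _ (by rw [hinit]; constructor <;> linarith)
  have hG : ∀ s ∈ Ico 0 (φ 0), 0 < ∫ r in s..φ 0, f r := by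
    rw [hinit]
    exact integral_pos_of_mem_Ico hf (fun s hs => hpos s ⟨hs.1, by linarith [hs.2]⟩) hθϑ
      (by linarith) hϑint fun s hs => (hϑneg s hs).le
  refine ⟨fun y₁ y₂ h₁ h₁₂ hpos₂ => ?_, exists_pos_eq_zero hf hφ hφ' hinit' hfφ0 hG hφ0⟩
  exact strictAntiOn_Icc_of_pos_on_Ioc hf hφ hφ' hinit' hfφ0 hG hpos₂ ⟨h₁.le, h₁₂.le⟩
    ⟨(h₁.trans h₁₂).le, le_rfl⟩ h₁₂

theorem stmt5 (f : ℝ → ℝ) (θ ϑ δ : ℝ) (hf : Continuous f) (hf0 : f 0 = 0)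
    (hθ : θ ∈ Ioo (0:ℝ) 1)
    (hneg : ∀ s ∈ Ioo 0 θ, f s < 0) (hpos : ∀ s ∈ Ioo θ 1, 0 < f s)
    (hϑ : ϑ ∈ Ioo θ 1)
    (hϑint : (∫ r in (0:ℝ)..ϑ, f r) = 0)
    (hϑneg : ∀ s ∈ Ioo (0:ℝ) ϑ, (∫ r in (0:ℝ)..s, f r) < 0)
    (hδ : δ ∈ Ioo 0 (1 - ϑ))
    (φ φ' : ℝ → ℝ)
    (hφ : ∀ y ∈ Ici (0:ℝ), HasDerivAt φ (φ' y) y)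
    (hφ' : ∀ y ∈ Ici (0:ℝ), HasDerivAt φ' (-f (φ y)) y)
    (hinit : φ 0 = ϑ + δ) (hinit' : φ' 0 = 0) :
    (∀ y₁ y₂ : ℝ, 0 < y₁ → y₁ < y₂ → (∀ z ∈ Ioc (0:ℝ) y₂, 0 < φ z) → φ y₂ < φ y₁) ∧
    ∃ K : ℝ, 0 < K ∧ φ K = 0 :=
  stmt5_general f θ ϑ δ hf hθ hpos hϑ hϑint hϑneg hδ φ φ' hφ hφ' hinit hinit'
end

section
/- Let f be monostable (continuous, f(0)=f(1)=0, f>0 on (0,1), f'(0⁺)>0, f'(1⁻)<0, extended by 0 outside [0,1]) and let ϱ ≥ 0. Then the ODE φ'' + f(φ) = 0 on [0,∞) with φ'(0) = ϱ⁻¹φ(0) (interpreted as φ(0)=0 when ϱ=0) has a unique nonzero bounded solution φ; it satisfies 0 ≤ φ < 1, φ' > 0, and φ(+∞) = 1. -/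
/-!
Since `f ≥ 0`, a bounded solution on `[0, ∞)` is concave, hence nondecreasing with `φ' → 0`, and
its limit `L` is a zero of `f`; the boundary condition makes a nonzero solution nonnegative, so
`L ≥ 1`. Conservation of the energy `φ'² - 2 ∫_φ^1 f` then gives the autonomous equation
`φ' = v(φ)` with `v = √(2 ∫_·^1 f)`, and the boundary condition pins `φ(0)` to the unique root `c`
of `c = ϱ v(c)`. Separating variables, `φ` is the inverse of the travel time
`T(s) = ∫_c^s dt / v(t)`. As `f` has a left derivative at `1`, `v(s) = O(1 - s)`, so `T` blows up
logarithmically at `1`: no solution reaches `1`, and `T` maps `(-∞, 1)` bijectively onto `ℝ`, its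
inverse being the solution.
-/

open Set Filter Topology Function

section Growth

variable {u u' : ℝ → ℝ}

lemma Convex.mul_sub_le_sub_of_hasDerivAt {D : Set ℝ} (hD : Convex ℝ D)
    (hu : ∀ y ∈ D, HasDerivAt u (u' y) y) {k : ℝ} (hk : ∀ y ∈ D, k ≤ u' y)
    {x y : ℝ} (hx : x ∈ D) (hy : y ∈ D) (hxy : x ≤ y) : k * (y - x) ≤ u y - u x :=
  hD.mul_sub_le_image_sub_of_le_deriv (fun z hz => (hu z hz).continuousAt.continuousWithinAt)
    (fun z hz => (hu z (interior_subset hz)).differentiableAt.differentiableWithinAt)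
    (fun z hz => (hu z (interior_subset hz)).deriv ▸ hk z (interior_subset hz)) x hx y hy hxy

lemma exists_gt_of_pos_le_deriv {A k : ℝ} (hu : ∀ y ∈ Ici A, HasDerivAt u (u' y) y)
    (hk : 0 < k) (hle : ∀ y ∈ Ici A, k ≤ u' y) (M : ℝ) : ∃ y ∈ Ici A, M < u y := by
  set T := A + |M - u A| / k + 1
  have hAT : A ≤ T := by
    have := div_nonneg (abs_nonneg (M - u A)) hk.le
    linarith
  refine ⟨T, hAT, ?_⟩
  have hgrowth := (convex_Ici A).mul_sub_le_sub_of_hasDerivAt hu hle self_mem_Ici hAT hAT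
  have hkT : k * (T - A) = |M - u A| + k := by simp only [T]; field_simp; ring
  linarith [le_abs_self (M - u A)]

lemma deriv_nonneg_of_bddBelow_of_antitoneOn {a M : ℝ} (hu : ∀ y ∈ Ici a, HasDerivAt u (u' y) y)
    (hM : ∀ y ∈ Ici a, M ≤ u y) (hanti : AntitoneOn u' (Ici a)) : ∀ y ∈ Ici a, 0 ≤ u' y := by
  intro y₀ hy₀
  by_contra! hneg
  have hy₀a : Ici y₀ ⊆ Ici a := Ici_subset_Ici.2 hy₀
  obtain ⟨y, hy, hlt⟩ := exists_gt_of_pos_le_deriv (u := -u) (fun y hy => (hu y (hy₀a hy)).neg)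
    (neg_pos.2 hneg) (fun y hy => neg_le_neg (hanti hy₀ (hy₀a hy) hy)) (-M)
  linarith [hM y (hy₀a hy), show -M < -u y from hlt]

lemma nonpos_of_tendsto_deriv {a M m : ℝ} (hu : ∀ y ∈ Ici a, HasDerivAt u (u' y) y)
    (hM : ∀ y ∈ Ici a, u y ≤ M) (hlim : Tendsto u' atTop (𝓝 m)) : m ≤ 0 := by
  by_contra! hm
  obtain ⟨A, hA⟩ := eventually_atTop.1 (hlim.eventually (eventually_ge_nhds (half_lt_self hm)))
  obtain ⟨y, hy, hMy⟩ := exists_gt_of_pos_le_deriv (A := max A a)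
    (fun y hy => hu y (le_of_max_le_right (mem_Ici.1 hy))) (half_pos hm)
    (fun y hy => hA y (le_of_max_le_left (mem_Ici.1 hy))) M
  linarith [hM y (le_of_max_le_right (mem_Ici.1 hy))]

lemma eq_zero_of_tendsto_deriv {a M m : ℝ} (hu : ∀ y ∈ Ici a, HasDerivAt u (u' y) y)
    (hM : ∀ y ∈ Ici a, |u y| ≤ M) (hlim : Tendsto u' atTop (𝓝 m)) : m = 0 :=
  le_antisymm (nonpos_of_tendsto_deriv hu (fun y hy => (abs_le.1 (hM y hy)).2) hlim)
    (neg_nonpos.1 (nonpos_of_tendsto_deriv (fun y hy => (hu y hy).neg)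
      (fun y hy => neg_le.1 (abs_le.1 (hM y hy)).1) hlim.neg))

lemma exists_tendsto_of_monotoneOn_Ici {a M : ℝ} (hu : MonotoneOn u (Ici a))
    (hM : ∀ y ∈ Ici a, u y ≤ M) : ∃ L, Tendsto u atTop (𝓝 L) := by
  have hbdd : BddAbove (range fun y : Ici a => u y) := ⟨M, by rintro _ ⟨y, rfl⟩; exact hM y y.2⟩
  exact ⟨_, tendsto_comp_val_Ici_atTop.1 (tendsto_atTop_ciSup (monotoneOn_iff_monotone.1 hu) hbdd)⟩

end Growth

section InverseOnIio

variable {g : ℝ → ℝ} {a : ℝ}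

lemma surjOn_Iio_of_tendsto (hg : ContinuousOn g (Iio a)) (hbot : Tendsto g atBot atBot)
    (htop : Tendsto g (𝓝[<] a) atTop) : SurjOn g (Iio a) univ := by
  intro y _
  obtain ⟨s₁, hs₁y, hs₁a⟩ := ((hbot.eventually_le_atBot y).and (eventually_lt_atBot a)).exists
  obtain ⟨s₂, hs₂y, hs₂a⟩ := ((htop.eventually_ge_atTop y).and self_mem_nhdsWithin).exists
  have hsub : uIcc s₁ s₂ ⊆ Iio a := ordConnected_Iio.uIcc_subset hs₁a hs₂a
  obtain ⟨s, hs, rfl⟩ := intermediate_value_uIcc (hg.mono hsub) (mem_uIcc.2 (Or.inl ⟨hs₁y, hs₂y⟩))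
  exact ⟨s, hsub hs, rfl⟩

lemma StrictMonoOn.invFunOn_Iio_apply (hg : StrictMonoOn g (Iio a)) {s : ℝ} (hs : s < a) :
    invFunOn g (Iio a) (g s) = s :=
  hg.injOn.leftInvOn_invFunOn hs

variable (hg : StrictMonoOn g (Iio a)) (hsurj : SurjOn g (Iio a) univ)
include hsurj

lemma invFunOn_Iio_lt (y : ℝ) : invFunOn g (Iio a) y < a :=
  hsurj.mapsTo_invFunOn (mem_univ y)

lemma apply_invFunOn_Iio (y : ℝ) : g (invFunOn g (Iio a) y) = y :=
  hsurj.rightInvOn_invFunOn (mem_univ y)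

include hg

lemma strictMono_invFunOn_Iio : StrictMono (invFunOn g (Iio a)) := by
  intro y₁ y₂ h
  rwa [← hg.lt_iff_lt (invFunOn_Iio_lt hsurj y₁) (invFunOn_Iio_lt hsurj y₂),
    apply_invFunOn_Iio hsurj, apply_invFunOn_Iio hsurj]

lemma continuous_invFunOn_Iio : Continuous (invFunOn g (Iio a)) := by
  have hrange : invFunOn g (Iio a) '' univ = Iio a :=
    Subset.antisymm (image_subset_iff.2 fun y _ => invFunOn_Iio_lt hsurj y)
      fun s hs => ⟨g s, mem_univ _, hg.invFunOn_Iio_apply hs⟩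
  refine continuous_iff_continuousAt.2 fun y => continuousAt_of_monotoneOn_of_image_mem_nhds
    ((strictMono_invFunOn_Iio hg hsurj).monotone.monotoneOn univ) univ_mem ?_
  rw [hrange]
  exact Iio_mem_nhds (invFunOn_Iio_lt hsurj y)

lemma tendsto_invFunOn_Iio_atTop : Tendsto (invFunOn g (Iio a)) atTop (𝓝[<] a) := by
  refine tendsto_nhdsWithin_iff.2 ⟨?_, Eventually.of_forall (invFunOn_Iio_lt hsurj)⟩
  refine (tendsto_order.2 ⟨fun s hs => ?_, fun s hs => ?_⟩)
  · obtain ⟨s', hss', hs'a⟩ := exists_between hs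
    filter_upwards [eventually_ge_atTop (g s')] with y hy
    calc s < s' := hss'
      _ = invFunOn g (Iio a) (g s') := (hg.invFunOn_Iio_apply hs'a).symm
      _ ≤ invFunOn g (Iio a) y := (strictMono_invFunOn_Iio hg hsurj).monotone hy
  · exact Eventually.of_forall fun y => (invFunOn_Iio_lt hsurj y).trans hs

lemma hasDerivAt_invFunOn_Iio {g' y : ℝ} (hderiv : HasDerivAt g g' (invFunOn g (Iio a) y))
    (hg' : g' ≠ 0) : HasDerivAt (invFunOn g (Iio a)) g'⁻¹ y :=
  hderiv.of_local_left_inverse (continuous_invFunOn_Iio hg hsurj).continuousAt hg'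
    (Eventually.of_forall (apply_invFunOn_Iio hsurj))

end InverseOnIio

section Potential

variable {f : ℝ → ℝ}

noncomputable def potential (f : ℝ → ℝ) (s : ℝ) : ℝ := 2 * ∫ t in s..1, f t

lemma hasDerivAt_potential (hf : Continuous f) (s : ℝ) :
    HasDerivAt (potential f) (-(2 * f s)) s := by
  have := (intervalIntegral.integral_hasDerivAt_left (hf.intervalIntegrable s 1)
    (hf.stronglyMeasurableAtFilter _ _) hf.continuousAt).const_mul 2
  rwa [mul_neg] at this

lemma continuous_potential (hf : Continuous f) : Continuous (potential f) :=
  continuous_iff_continuousAt.2 fun s => (hasDerivAt_potential hf s).continuousAt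

lemma antitone_potential (hf : Continuous f) (hfnn : ∀ s, 0 ≤ f s) : Antitone (potential f) :=
  antitone_of_hasDerivAt_nonpos (hasDerivAt_potential hf) fun s => by simp [hfnn s]

lemma potential_one : potential f 1 = 0 := by simp [potential]

lemma potential_eq_zero_of_one_le (hf_Ici : ∀ s ∈ Ici (1:ℝ), f s = 0) {s : ℝ} (hs : 1 ≤ s) :
    potential f s = 0 := by
  rw [potential, intervalIntegral.integral_congr (g := fun _ => 0) fun t ht => hf_Ici t ?_]
  · simp
  · rw [uIcc_of_ge hs] at ht
    exact ht.1

lemma potential_pos (hf : Continuous f) (hfnn : ∀ s, 0 ≤ f s)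
    (hfpos : ∀ s ∈ Ioo (0:ℝ) 1, 0 < f s) {s : ℝ} (hs : s < 1) : 0 < potential f s := by
  have hpos : 0 < potential f (max s 0) :=
    mul_pos two_pos (intervalIntegral.intervalIntegral_pos_of_pos_on (hf.intervalIntegrable _ _)
      (fun t ht => hfpos t ⟨(le_max_right _ _).trans_lt ht.1, ht.2⟩) (max_lt hs one_pos))
  exact hpos.trans_le (antitone_potential hf hfnn (le_max_left _ _))

lemma potential_le_potential_zero (hf : Continuous f) (hfnn : ∀ s, 0 ≤ f s)
    (hf_Iic : ∀ s ∈ Iic (0:ℝ), f s = 0) (s : ℝ) : potential f s ≤ potential f 0 := by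
  rcases le_total 0 s with hs | hs
  · exact antitone_potential hf hfnn hs
  · have := (convex_Icc s 0).mul_sub_le_sub_of_hasDerivAt (fun y _ => hasDerivAt_potential hf y)
      (k := 0) (fun y hy => by simp [hf_Iic y hy.2]) (left_mem_Icc.2 hs) (right_mem_Icc.2 hs) hs
    linarith

lemma eventually_potential_le_mul_sq (hf : Continuous f) (hf1 : f 1 = 0) {K : ℝ}
    (hK : ∀ᶠ s in 𝓝[<] 1, f s ≤ K * (1 - s)) :
    ∀ᶠ s in 𝓝[<] 1, potential f s ≤ K * (1 - s) ^ 2 := by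
  obtain ⟨a, ha, hsub⟩ := mem_nhdsLT_iff_exists_Ioo_subset.1 hK
  have hbound : ∀ s ∈ Ioc a 1, f s ≤ K * (1 - s) := fun s hs =>
    hs.2.eq_or_lt.elim (fun h => by simp [h, hf1]) fun h => hsub ⟨hs.1, h⟩
  have hderiv : ∀ y ∈ Ioc a 1, HasDerivAt (fun s => potential f s - K * (1 - s) ^ 2)
      (-(2 * f y) + 2 * K * (1 - y)) y := fun y _ =>
    ((hasDerivAt_potential hf y).sub
      ((((hasDerivAt_id y).const_sub 1).pow 2).const_mul K)).congr_deriv (by simp; ring)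
  filter_upwards [Ioo_mem_nhdsLT ha] with s hs
  have := (convex_Ioc a 1).mul_sub_le_sub_of_hasDerivAt hderiv (k := 0)
    (fun y hy => by linarith [hbound y hy]) ⟨hs.1, hs.2.le⟩ ⟨ha, le_rfl⟩ hs.2.le
  simp only [potential_one] at this
  linarith

end Potential

lemma HasDerivWithinAt.eventually_le_add_mul_sub {f : ℝ → ℝ} {b x K : ℝ}
    (hd : HasDerivWithinAt f b (Iic x) x) (hK : -b < K) :
    ∀ᶠ s in 𝓝[<] x, f s ≤ f x + K * (x - s) := by
  have hslope := hasDerivWithinAt_iff_tendsto_slope.1 hd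
  rw [Iic_sdiff_right] at hslope
  filter_upwards [hslope.eventually (eventually_gt_nhds (neg_lt.1 hK)), self_mem_nhdsWithin]
    with s hs hsx
  rw [slope_def_field, lt_div_iff_of_neg (sub_neg.2 hsx)] at hs
  linarith

section Speed

variable {f : ℝ → ℝ}

noncomputable def speed (f : ℝ → ℝ) (s : ℝ) : ℝ := √(potential f s)

lemma continuous_speed (hf : Continuous f) : Continuous (speed f) :=
  (continuous_potential hf).sqrt

lemma antitone_speed (hf : Continuous f) (hfnn : ∀ s, 0 ≤ f s) : Antitone (speed f) :=
  fun _ _ h => Real.sqrt_le_sqrt (antitone_potential hf hfnn h)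

lemma speed_pos (hf : Continuous f) (hfnn : ∀ s, 0 ≤ f s) (hfpos : ∀ s ∈ Ioo (0:ℝ) 1, 0 < f s)
    {s : ℝ} (hs : s < 1) : 0 < speed f s :=
  Real.sqrt_pos.2 (potential_pos hf hfnn hfpos hs)

lemma speed_le_speed_zero (hf : Continuous f) (hfnn : ∀ s, 0 ≤ f s)
    (hf_Iic : ∀ s ∈ Iic (0:ℝ), f s = 0) (s : ℝ) : speed f s ≤ speed f 0 :=
  Real.sqrt_le_sqrt (potential_le_potential_zero hf hfnn hf_Iic s)

lemma exists_eventually_speed_le_mul (hf : Continuous f) (hf1 : f 1 = 0) {b : ℝ}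
    (hderiv1 : HasDerivWithinAt f b (Iic 1) 1) :
    ∃ K, ∀ᶠ s in 𝓝[<] 1, speed f s ≤ K * (1 - s) := by
  have hfK : ∀ᶠ s in 𝓝[<] 1, f s ≤ (|b| + 1) * (1 - s) := by
    filter_upwards [hderiv1.eventually_le_add_mul_sub (K := |b| + 1)
      (by linarith [neg_le_abs b])] with s hs
    rwa [hf1, zero_add] at hs
  refine ⟨√(|b| + 1), ?_⟩
  filter_upwards [eventually_potential_le_mul_sq hf hf1 hfK, self_mem_nhdsWithin] with s hs hs1
  calc speed f s ≤ √((|b| + 1) * (1 - s) ^ 2) := Real.sqrt_le_sqrt hs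
    _ = √(|b| + 1) * (1 - s) := by
      rw [Real.sqrt_mul (by positivity), Real.sqrt_sq (sub_nonneg.2 (le_of_lt hs1))]

lemma hasDerivAt_speed (hf : Continuous f) (hfnn : ∀ s, 0 ≤ f s)
    (hfpos : ∀ s ∈ Ioo (0:ℝ) 1, 0 < f s) {s : ℝ} (hs : s < 1) :
    HasDerivAt (speed f) (-f s / speed f s) s := by
  refine ((hasDerivAt_potential hf s).sqrt (potential_pos hf hfnn hfpos hs).ne').congr_deriv ?_
  rw [neg_div, neg_div, mul_div_mul_left _ _ two_ne_zero, speed]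

lemma hasDerivAt_speed_comp (hf : Continuous f) (hfnn : ∀ s, 0 ≤ f s)
    (hfpos : ∀ s ∈ Ioo (0:ℝ) 1, 0 < f s) {φ : ℝ → ℝ} {y : ℝ}
    (hφ : HasDerivAt φ (speed f (φ y)) y) (hlt : φ y < 1) :
    HasDerivAt (fun y => speed f (φ y)) (-f (φ y)) y := by
  refine ((hasDerivAt_speed hf hfnn hfpos hlt).comp y hφ).congr_deriv ?_
  exact div_mul_cancel₀ _ (speed_pos hf hfnn hfpos hlt).ne'

lemma strictMono_sub_mul_speed (hf : Continuous f) (hfnn : ∀ s, 0 ≤ f s) {ϱ : ℝ}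
    (hϱ : 0 ≤ ϱ) : StrictMono fun s => s - ϱ * speed f s := fun x y h => by
  have := mul_le_mul_of_nonneg_left (antitone_speed hf hfnn h.le) hϱ
  simp only
  linarith

lemma exists_eq_mul_speed (hf : Continuous f) {ϱ : ℝ} (hϱ : 0 ≤ ϱ) :
    ∃ c, 0 ≤ c ∧ c < 1 ∧ c = ϱ * speed f c := by
  have hcont : ContinuousOn (fun s => s - ϱ * speed f s) (Icc 0 1) :=
    (continuous_id.sub (continuous_const.mul (continuous_speed hf))).continuousOn
  have h0 : 0 - ϱ * speed f 0 ≤ 0 := by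
    have := mul_nonneg hϱ (Real.sqrt_nonneg (potential f 0))
    rw [speed]
    linarith
  have h1 : 1 - ϱ * speed f 1 = 1 := by simp [speed, potential_one]
  obtain ⟨c, ⟨hc0, hc1⟩, hc⟩ :=
    intermediate_value_Icc zero_le_one hcont ⟨h0, h1.symm ▸ zero_le_one⟩
  refine ⟨c, hc0, hc1.lt_of_ne ?_, by linarith [hc]⟩
  rintro rfl
  exact one_ne_zero (h1.symm.trans hc)

end Speed

section TravelTime

variable {v : ℝ → ℝ} {c : ℝ}

/-- The time a solution of `φ' = v φ` needs to get from `c` to `s`. -/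
noncomputable def travelTime (v : ℝ → ℝ) (c s : ℝ) : ℝ := ∫ t in c..s, (v t)⁻¹

lemma hasDerivAt_travelTime (hv : Continuous v) (hvpos : ∀ s < 1, 0 < v s) (hc : c < 1)
    {s : ℝ} (hs : s < 1) : HasDerivAt (travelTime v c) (v s)⁻¹ s := by
  have hcont : ContinuousOn (fun t => (v t)⁻¹) (Iio 1) :=
    hv.continuousOn.inv₀ fun t ht => (hvpos t ht).ne'
  exact intervalIntegral.integral_hasDerivAt_right
    (hcont.mono (ordConnected_Iio.uIcc_subset hc hs)).intervalIntegrable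
    (hcont.stronglyMeasurableAtFilter isOpen_Iio s hs) (hcont.continuousAt (Iio_mem_nhds hs))

lemma continuousOn_travelTime (hv : Continuous v) (hvpos : ∀ s < 1, 0 < v s) (hc : c < 1) :
    ContinuousOn (travelTime v c) (Iio 1) := fun _ hs =>
  (hasDerivAt_travelTime hv hvpos hc hs).continuousAt.continuousWithinAt

lemma strictMonoOn_travelTime (hv : Continuous v) (hvpos : ∀ s < 1, 0 < v s) (hc : c < 1) :
    StrictMonoOn (travelTime v c) (Iio 1) :=
  strictMonoOn_of_hasDerivWithinAt_pos (convex_Iio 1) (continuousOn_travelTime hv hvpos hc)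
    (fun _ hs =>
      (hasDerivAt_travelTime hv hvpos hc (mem_Iio.1 (interior_subset hs))).hasDerivWithinAt)
    fun s hs => inv_pos.2 (hvpos s (mem_Iio.1 (interior_subset hs)))

lemma tendsto_travelTime_atBot (hv : Continuous v) (hvpos : ∀ s < 1, 0 < v s) (hc : c < 1)
    {V : ℝ} (hV : ∀ s, v s ≤ V) : Tendsto (travelTime v c) atBot atBot := by
  have hVpos : 0 < V := (hvpos c hc).trans_le (hV c)
  have hle : ∀ s ≤ c, travelTime v c s ≤ V⁻¹ * (s - c) := fun s hs => by
    have := (convex_Iic c).mul_sub_le_sub_of_hasDerivAt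
      (fun y hy => hasDerivAt_travelTime hv hvpos hc (lt_of_le_of_lt hy hc))
      (fun y hy => inv_anti₀ (hvpos y (lt_of_le_of_lt hy hc)) (hV y)) hs (mem_Iic.2 le_rfl) hs
    simp only [travelTime, intervalIntegral.integral_same] at this ⊢
    linarith
  refine tendsto_atBot_mono' _ ((eventually_le_atBot c).mono hle) ?_
  exact (tendsto_atBot_add_const_right _ (-c) tendsto_id).const_mul_atBot (inv_pos.2 hVpos)

lemma tendsto_log_one_sub_nhdsLT_one : Tendsto (fun s : ℝ => Real.log (1 - s)) (𝓝[<] 1) atBot :=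
  Real.tendsto_log_nhdsGT_zero.comp (tendsto_nhdsWithin_of_tendsto_nhds_of_eventually_within _
    (by simpa using ((continuous_sub_left (1:ℝ)).tendsto 1).mono_left nhdsWithin_le_nhds)
    (eventually_nhdsWithin_of_forall fun s hs => mem_Ioi.2 (sub_pos.2 hs)))

/-- Comparison with `-log (1 - s) / K`, the travel time for the speed `K (1 - s)`. -/
lemma tendsto_travelTime_nhdsLT_one (hv : Continuous v) (hvpos : ∀ s < 1, 0 < v s) (hc : c < 1)
    {K : ℝ} (hK : ∀ᶠ s in 𝓝[<] 1, v s ≤ K * (1 - s)) :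
    Tendsto (travelTime v c) (𝓝[<] 1) atTop := by
  obtain ⟨a, ha, hsub⟩ := mem_nhdsLT_iff_exists_Ioo_subset.1 hK
  obtain ⟨b, hab, hb1⟩ := exists_between (mem_Iio.1 ha)
  have hKpos : 0 < K := pos_of_mul_pos_left ((hvpos b hb1).trans_le (hsub ⟨hab, hb1⟩))
    (sub_pos.2 hb1).le
  set u := fun s => travelTime v c s + K⁻¹ * Real.log (1 - s)
  have hderiv : ∀ y ∈ Ioo a 1, HasDerivAt u ((v y)⁻¹ - (K * (1 - y))⁻¹) y := fun y hy =>
    ((hasDerivAt_travelTime hv hvpos hc hy.2).add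
      ((((hasDerivAt_id y).const_sub 1).log (sub_pos.2 hy.2).ne').const_mul K⁻¹)).congr_deriv
      (by rw [mul_inv]; simp; ring)
  have hmono : ∀ s ∈ Ioo b 1, u b ≤ u s := fun s hs => by
    have := (convex_Ioo a 1).mul_sub_le_sub_of_hasDerivAt hderiv (k := 0)
      (fun y hy => sub_nonneg.2 (inv_anti₀ (hvpos y hy.2) (hsub hy))) ⟨hab, hb1⟩
      ⟨hab.trans hs.1, hs.2⟩ hs.1.le
    linarith
  refine tendsto_atTop_mono' _ (eventually_of_mem (Ioo_mem_nhdsLT hb1) fun s hs =>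
    (sub_le_iff_le_add.2 (hmono s hs) : u b - K⁻¹ * Real.log (1 - s) ≤ travelTime v c s)) ?_
  exact tendsto_atTop_add_const_left _ _
    ((tendsto_log_one_sub_nhdsLT_one.const_mul_atBot_of_neg (neg_lt_zero.2 (inv_pos.2 hKpos))).congr
      fun s => by ring)

end TravelTime

lemma tendsto_travelTime_speed_nhdsLT_one {f : ℝ → ℝ} (hf : Continuous f) (hfnn : ∀ s, 0 ≤ f s)
    (hfpos : ∀ s ∈ Ioo (0:ℝ) 1, 0 < f s) (hf1 : f 1 = 0) {b : ℝ}
    (hderiv1 : HasDerivWithinAt f b (Iic 1) 1) {c : ℝ} (hc : c < 1) :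
    Tendsto (travelTime (speed f) c) (𝓝[<] 1) atTop :=
  let ⟨_, hK⟩ := exists_eventually_speed_le_mul hf hf1 hderiv1
  tendsto_travelTime_nhdsLT_one (continuous_speed hf) (fun _ => speed_pos hf hfnn hfpos) hc hK

section SpeedEquation

variable {v ψ : ℝ → ℝ} {c : ℝ}

lemma hasDerivAt_invFunOn_travelTime (hv : Continuous v) (hvpos : ∀ s < 1, 0 < v s) (hc : c < 1)
    (hsurj : SurjOn (travelTime v c) (Iio 1) univ) (y : ℝ) :
    HasDerivAt (invFunOn (travelTime v c) (Iio 1)) (v (invFunOn (travelTime v c) (Iio 1) y)) y := by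
  have hlt := invFunOn_Iio_lt hsurj y
  simpa using hasDerivAt_invFunOn_Iio (strictMonoOn_travelTime hv hvpos hc) hsurj
    (hasDerivAt_travelTime hv hvpos hc hlt) (inv_pos.2 (hvpos _ hlt)).ne'

lemma travelTime_comp_eq_add (hv : Continuous v) (hvpos : ∀ s < 1, 0 < v s) (hc : c < 1)
    {t : ℝ} (ht : 0 ≤ t) (hψ : ∀ y ∈ Icc 0 t, HasDerivAt ψ (v (ψ y)) y)
    (hlt : ∀ y ∈ Icc 0 t, ψ y < 1) : travelTime v c (ψ t) = travelTime v c (ψ 0) + t := by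
  have hW : ∀ y ∈ Icc 0 t, HasDerivAt (fun y => travelTime v c (ψ y) - y) 0 y := fun y hy =>
    (((hasDerivAt_travelTime hv hvpos hc (hlt y hy)).comp y (hψ y hy)).sub
      (hasDerivAt_id y)).congr_deriv (by simp [inv_mul_cancel₀ (hvpos _ (hlt y hy)).ne'])
  have := constant_of_has_deriv_right_zero
    (fun y hy => (hW y hy).continuousAt.continuousWithinAt)
    (fun y hy => (hW y (Ico_subset_Icc_self hy)).hasDerivWithinAt) t (right_mem_Icc.2 ht)
  simp only [sub_zero] at this
  linarith

lemma solution_lt_one (hv : Continuous v) (hvpos : ∀ s < 1, 0 < v s) (hc : c < 1)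
    (htop : Tendsto (travelTime v c) (𝓝[<] 1) atTop)
    (hψ : ∀ y ∈ Ici (0:ℝ), HasDerivAt ψ (v (ψ y)) y) (hmono : MonotoneOn ψ (Ici 0))
    (h0 : ψ 0 < 1) : ∀ y ∈ Ici (0:ℝ), ψ y < 1 := by
  by_contra! h
  obtain ⟨y₁, hy₁, h1⟩ := h
  -- every level `s < 1` above `ψ 0` is then reached before time `y₁`
  have hbdd : ∀ s ∈ Ioo (ψ 0) 1, travelTime v c s ≤ travelTime v c (ψ 0) + y₁ := by
    intro s hs
    obtain ⟨t, ht, rfl⟩ := intermediate_value_Icc (mem_Ici.1 hy₁)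
      (fun y hy => (hψ y hy.1).continuousAt.continuousWithinAt) ⟨hs.1.le, hs.2.le.trans h1⟩
    rw [travelTime_comp_eq_add hv hvpos hc ht.1 (fun y hy => hψ y hy.1)
      fun y hy => (hmono hy.1 ht.1 hy.2).trans_lt hs.2]
    linarith [ht.2]
  obtain ⟨s, hs, hsψ⟩ :=
    ((htop.eventually_gt_atTop (travelTime v c (ψ 0) + y₁)).and (Ioo_mem_nhdsLT h0)).exists
  exact (hbdd s hsψ).not_gt hs

end SpeedEquation

section BoundedSolution

variable {f ψ ψ' : ℝ → ℝ} {M : ℝ}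

lemma antitoneOn_solution_deriv (hfnn : ∀ s, 0 ≤ f s)
    (hψ' : ∀ y ∈ Ici (0:ℝ), HasDerivAt ψ' (-f (ψ y)) y) : AntitoneOn ψ' (Ici 0) :=
  antitoneOn_of_hasDerivWithinAt_nonpos (convex_Ici 0)
    (fun y hy => (hψ' y hy).continuousAt.continuousWithinAt)
    (fun y hy => (hψ' y (interior_subset hy)).hasDerivWithinAt) fun _ _ => neg_nonpos.2 (hfnn _)

variable (hfnn : ∀ s, 0 ≤ f s) (hψ : ∀ y ∈ Ici (0:ℝ), HasDerivAt ψ (ψ' y) y)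
  (hψ' : ∀ y ∈ Ici (0:ℝ), HasDerivAt ψ' (-f (ψ y)) y) (hM : ∀ y ∈ Ici (0:ℝ), |ψ y| ≤ M)
include hfnn hψ hψ' hM

lemma solution_deriv_nonneg : ∀ y ∈ Ici (0:ℝ), 0 ≤ ψ' y :=
  deriv_nonneg_of_bddBelow_of_antitoneOn hψ (fun y hy => neg_le_of_abs_le (hM y hy))
    (antitoneOn_solution_deriv hfnn hψ')

lemma monotoneOn_solution : MonotoneOn ψ (Ici 0) :=
  monotoneOn_of_hasDerivWithinAt_nonneg (convex_Ici 0)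
    (fun y hy => (hψ y hy).continuousAt.continuousWithinAt)
    (fun y hy => (hψ y (interior_subset hy)).hasDerivWithinAt)
    fun y hy => solution_deriv_nonneg hfnn hψ hψ' hM y (interior_subset hy)

lemma tendsto_solution_deriv_zero : Tendsto ψ' atTop (𝓝 0) := by
  obtain ⟨L, hL⟩ := exists_tendsto_of_monotoneOn_Ici (u := -ψ') (M := 0)
    (fun x hx y hy hxy => neg_le_neg (antitoneOn_solution_deriv hfnn hψ' hx hy hxy))
    (fun y hy => neg_nonpos.2 (solution_deriv_nonneg hfnn hψ hψ' hM y hy))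
  have hlim : Tendsto ψ' atTop (𝓝 (-L)) := by simpa using hL.neg
  rwa [eq_zero_of_tendsto_deriv hψ hM hlim] at hlim

lemma apply_eq_zero_of_tendsto_solution (hf : Continuous f) {L : ℝ}
    (hL : Tendsto ψ atTop (𝓝 L)) : f L = 0 := by
  have hψ'nn := solution_deriv_nonneg hfnn hψ hψ' hM
  have hbdd : ∀ y ∈ Ici (0:ℝ), |ψ' y| ≤ ψ' 0 := fun y hy =>
    abs_le.2 ⟨by linarith [hψ'nn y hy, hψ'nn 0 self_mem_Ici],
      antitoneOn_solution_deriv hfnn hψ' self_mem_Ici hy hy⟩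
  exact neg_eq_zero.1 (eq_zero_of_tendsto_deriv hψ' hbdd ((hf.tendsto L).comp hL).neg)

end BoundedSolution

lemma solution_deriv_sq_eq_potential {f ψ ψ' : ℝ → ℝ} (hf : Continuous f)
    (hψ : ∀ y ∈ Ici (0:ℝ), HasDerivAt ψ (ψ' y) y)
    (hψ' : ∀ y ∈ Ici (0:ℝ), HasDerivAt ψ' (-f (ψ y)) y) {L : ℝ} (hL : Tendsto ψ atTop (𝓝 L))
    (hL0 : potential f L = 0) (hψ'0 : Tendsto ψ' atTop (𝓝 0)) :
    ∀ y ∈ Ici (0:ℝ), ψ' y ^ 2 = potential f (ψ y) := by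
  set E := fun y => ψ' y ^ 2 - potential f (ψ y)
  have hE : ∀ y ∈ Ici (0:ℝ), HasDerivAt E 0 y := fun y hy =>
    (((hψ' y hy).pow 2).sub ((hasDerivAt_potential hf (ψ y)).comp y (hψ y hy))).congr_deriv
      (by simp; ring)
  have hconst : ∀ y ∈ Ici (0:ℝ), E y = E 0 := fun y hy =>
    constant_of_has_deriv_right_zero (fun x hx => (hE x hx.1).continuousAt.continuousWithinAt)
      (fun x hx => (hE x hx.1).hasDerivWithinAt) y ⟨hy, le_rfl⟩
  have hlim : Tendsto E atTop (𝓝 0) := by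
    simpa [hL0] using (hψ'0.pow 2).sub (((continuous_potential hf).tendsto L).comp hL)
  have hE0 : E 0 = 0 := tendsto_nhds_unique (tendsto_const_nhds.congr'
    (eventually_atTop.2 ⟨0, fun y hy => (hconst y hy).symm⟩)) hlim
  intro y hy
  have := hconst y hy
  simp only [E] at this hE0
  linarith

section Monostable

variable {f ψ ψ' : ℝ → ℝ} {ϱ M : ℝ}

lemma solution_deriv_eq_speed (hf : Continuous f) (hfnn : ∀ s, 0 ≤ f s)
    (hfpos : ∀ s ∈ Ioo (0:ℝ) 1, 0 < f s) (hf_Ici : ∀ s ∈ Ici (1:ℝ), f s = 0) (hϱ : 0 ≤ ϱ)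
    (hψ : ∀ y ∈ Ici (0:ℝ), HasDerivAt ψ (ψ' y) y)
    (hψ' : ∀ y ∈ Ici (0:ℝ), HasDerivAt ψ' (-f (ψ y)) y) (hbc : ϱ * ψ' 0 = ψ 0)
    (hnz : ∃ y ∈ Ici (0:ℝ), ψ y ≠ 0) (hM : ∀ y ∈ Ici (0:ℝ), |ψ y| ≤ M) :
    ∀ y ∈ Ici (0:ℝ), ψ' y = speed f (ψ y) := by
  have hψ'nn := solution_deriv_nonneg hfnn hψ hψ' hM
  have hmono := monotoneOn_solution hfnn hψ hψ' hM
  obtain ⟨L, hL⟩ := exists_tendsto_of_monotoneOn_Ici hmono fun y hy => le_of_abs_le (hM y hy)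
  have hle : ∀ y ∈ Ici (0:ℝ), ψ y ≤ L := fun y hy => ge_of_tendsto hL
    (eventually_atTop.2 ⟨y, fun z hz => hmono hy (mem_Ici.2 (le_trans hy hz)) hz⟩)
  have hLpos : 0 < L := by
    obtain ⟨y, hy, hne⟩ := hnz
    have hψ0 : 0 ≤ ψ 0 := hbc ▸ mul_nonneg hϱ (hψ'nn 0 self_mem_Ici)
    exact (lt_of_le_of_ne (hψ0.trans (hmono self_mem_Ici hy hy)) hne.symm).trans_le (hle y hy)
  have hL1 : 1 ≤ L := not_lt.1 fun h => (hfpos L ⟨hLpos, h⟩).ne'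
    (apply_eq_zero_of_tendsto_solution hfnn hψ hψ' hM hf hL)
  have hsq := solution_deriv_sq_eq_potential hf hψ hψ' hL
    (potential_eq_zero_of_one_le hf_Ici hL1) (tendsto_solution_deriv_zero hfnn hψ hψ' hM)
  intro y hy
  rw [speed, ← hsq y hy, Real.sqrt_sq (hψ'nn y hy)]

lemma solution_lt_one_and_travelTime_eq (hf : Continuous f) (hfnn : ∀ s, 0 ≤ f s)
    (hfpos : ∀ s ∈ Ioo (0:ℝ) 1, 0 < f s) (hf_Ici : ∀ s ∈ Ici (1:ℝ), f s = 0) (hϱ : 0 ≤ ϱ)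
    {c : ℝ} (hc1 : c < 1) (hc : c = ϱ * speed f c)
    (htop : Tendsto (travelTime (speed f) c) (𝓝[<] 1) atTop)
    (hψ : ∀ y ∈ Ici (0:ℝ), HasDerivAt ψ (ψ' y) y)
    (hψ' : ∀ y ∈ Ici (0:ℝ), HasDerivAt ψ' (-f (ψ y)) y) (hbc : ϱ * ψ' 0 = ψ 0)
    (hnz : ∃ y ∈ Ici (0:ℝ), ψ y ≠ 0) (hM : ∀ y ∈ Ici (0:ℝ), |ψ y| ≤ M) :
    ∀ y ∈ Ici (0:ℝ), ψ y < 1 ∧ travelTime (speed f) c (ψ y) = y := by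
  have hv := continuous_speed hf
  have hvpos : ∀ s < 1, 0 < speed f s := fun s => speed_pos hf hfnn hfpos
  have hψv := solution_deriv_eq_speed hf hfnn hfpos hf_Ici hϱ hψ hψ' hbc hnz hM
  have hψ1 : ∀ y ∈ Ici (0:ℝ), HasDerivAt ψ (speed f (ψ y)) y := fun y hy => hψv y hy ▸ hψ y hy
  have hψ0 : ψ 0 = c := (strictMono_sub_mul_speed hf hfnn hϱ).injective <| by
    rw [← hψv 0 self_mem_Ici, hbc, ← hc, sub_self, sub_self]
  have hlt := solution_lt_one hv hvpos hc1 htop hψ1 (monotoneOn_solution hfnn hψ hψ' hM)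
    (hψ0 ▸ hc1)
  refine fun y hy => ⟨hlt y hy, ?_⟩
  rw [travelTime_comp_eq_add hv hvpos hc1 hy (fun x hx => hψ1 x hx.1) (fun x hx => hlt x hx.1),
    hψ0, travelTime, intervalIntegral.integral_same, zero_add]

end Monostable

lemma apply_eq_zero_of_notMem_Ioo {f : ℝ → ℝ} (hf0 : f 0 = 0) (hf1 : f 1 = 0)
    (hfout : ∀ s, s ∉ Icc (0:ℝ) 1 → f s = 0) {s : ℝ} (hs : s ∉ Ioo (0:ℝ) 1) : f s = 0 := by
  by_cases h : s ∈ Icc (0:ℝ) 1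
  · rcases h.1.eq_or_lt with rfl | h0
    · exact hf0
    rcases h.2.eq_or_lt with rfl | h1
    · exact hf1
    exact absurd ⟨h0, h1⟩ hs
  · exact hfout s h

theorem stmt9_general (f : ℝ → ℝ) (hf : Continuous f)
    (hf0 : f 0 = 0) (hf1 : f 1 = 0)
    (hfpos : ∀ s ∈ Ioo (0:ℝ) 1, 0 < f s)
    (hfout : ∀ s, s ∉ Icc (0:ℝ) 1 → f s = 0)
    (b : ℝ) (hderiv1 : HasDerivWithinAt f b (Iic 1) 1)
    (ϱ : ℝ) (hϱ : 0 ≤ ϱ) :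
    ∃ φ φ' : ℝ → ℝ,
      (∀ y ∈ Ici (0:ℝ), HasDerivAt φ (φ' y) y) ∧
      (∀ y ∈ Ici (0:ℝ), HasDerivAt φ' (-f (φ y)) y) ∧
      ϱ * φ' 0 = φ 0 ∧
      (∃ y ∈ Ici (0:ℝ), φ y ≠ 0) ∧
      (∃ M, ∀ y ∈ Ici (0:ℝ), |φ y| ≤ M) ∧
      (∀ y ∈ Ici (0:ℝ), 0 ≤ φ y ∧ φ y < 1) ∧
      (∀ y ∈ Ici (0:ℝ), 0 < φ' y) ∧
      Tendsto φ atTop (nhds 1) ∧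
      (∀ ψ ψ' : ℝ → ℝ,
        (∀ y ∈ Ici (0:ℝ), HasDerivAt ψ (ψ' y) y) →
        (∀ y ∈ Ici (0:ℝ), HasDerivAt ψ' (-f (ψ y)) y) →
        ϱ * ψ' 0 = ψ 0 → (∃ y ∈ Ici (0:ℝ), ψ y ≠ 0) →
        (∃ M, ∀ y ∈ Ici (0:ℝ), |ψ y| ≤ M) →
        ∀ y ∈ Ici (0:ℝ), ψ y = φ y) := by
  have hf_Iic : ∀ s ∈ Iic (0:ℝ), f s = 0 := fun s hs =>
    apply_eq_zero_of_notMem_Ioo hf0 hf1 hfout fun h => h.1.not_ge hs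
  have hf_Ici : ∀ s ∈ Ici (1:ℝ), f s = 0 := fun s hs =>
    apply_eq_zero_of_notMem_Ioo hf0 hf1 hfout fun h => h.2.not_ge hs
  have hfnn : ∀ s, 0 ≤ f s := fun s =>
    if h : s ∈ Ioo (0:ℝ) 1 then (hfpos s h).le else (apply_eq_zero_of_notMem_Ioo hf0 hf1 hfout h).ge
  have hv := continuous_speed hf
  have hvpos : ∀ s < 1, 0 < speed f s := fun s => speed_pos hf hfnn hfpos
  obtain ⟨c, hc0, hc1, hc⟩ := exists_eq_mul_speed hf hϱ
  have hT := strictMonoOn_travelTime hv hvpos hc1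
  have htop := tendsto_travelTime_speed_nhdsLT_one hf hfnn hfpos hf1 hderiv1 hc1
  have hsurj := surjOn_Iio_of_tendsto (continuousOn_travelTime hv hvpos hc1)
    (tendsto_travelTime_atBot hv hvpos hc1 (speed_le_speed_zero hf hfnn hf_Iic)) htop
  set φ := invFunOn (travelTime (speed f) c) (Iio 1)
  have hφ0 : φ 0 = c := by simpa [travelTime] using hT.invFunOn_Iio_apply hc1
  have hφ' := hasDerivAt_invFunOn_travelTime hv hvpos hc1 hsurj
  have hφmono := strictMono_invFunOn_Iio hT hsurj
  have hφ : ∀ y ∈ Ici (0:ℝ), 0 ≤ φ y ∧ φ y < 1 := fun y hy =>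
    ⟨hc0.trans (hφ0 ▸ hφmono.monotone hy), invFunOn_Iio_lt hsurj y⟩
  refine ⟨φ, fun y => speed f (φ y), fun y _ => hφ' y,
    fun y hy => hasDerivAt_speed_comp hf hfnn hfpos (hφ' y) (hφ y hy).2,
    by simp only [hφ0, ← hc], ⟨1, mem_Ici.2 zero_le_one, (hc0.trans_lt (hφ0 ▸ hφmono one_pos)).ne'⟩,
    ⟨1, fun y hy => abs_le.2 ⟨by linarith [(hφ y hy).1], (hφ y hy).2.le⟩⟩, hφ,
    fun y hy => hvpos _ (hφ y hy).2,
    tendsto_nhds_of_tendsto_nhdsWithin (tendsto_invFunOn_Iio_atTop hT hsurj), ?_⟩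
  rintro ψ ψ' hψ hψ' hbc hnz ⟨M, hM⟩ y hy
  obtain ⟨hlt, hTψ⟩ := solution_lt_one_and_travelTime_eq hf hfnn hfpos hf_Ici hϱ hc1 hc htop
    hψ hψ' hbc hnz hM y hy
  rw [← hT.invFunOn_Iio_apply hlt, hTψ]

theorem stmt9 (f : ℝ → ℝ) (hf : Continuous f)
    (hf0 : f 0 = 0) (hf1 : f 1 = 0)
    (hfpos : ∀ s ∈ Ioo (0:ℝ) 1, 0 < f s)
    (hfout : ∀ s, s ∉ Icc (0:ℝ) 1 → f s = 0)
    (a : ℝ) (ha : 0 < a) (hderiv0 : HasDerivWithinAt f a (Ici 0) 0)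
    (b : ℝ) (hb : b < 0) (hderiv1 : HasDerivWithinAt f b (Iic 1) 1)
    (ϱ : ℝ) (hϱ : 0 ≤ ϱ) :
    ∃ φ φ' : ℝ → ℝ,
      (∀ y ∈ Ici (0:ℝ), HasDerivAt φ (φ' y) y) ∧
      (∀ y ∈ Ici (0:ℝ), HasDerivAt φ' (-f (φ y)) y) ∧
      ϱ * φ' 0 = φ 0 ∧
      (∃ y ∈ Ici (0:ℝ), φ y ≠ 0) ∧
      (∃ M, ∀ y ∈ Ici (0:ℝ), |φ y| ≤ M) ∧
      (∀ y ∈ Ici (0:ℝ), 0 ≤ φ y ∧ φ y < 1) ∧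
      (∀ y ∈ Ici (0:ℝ), 0 < φ' y) ∧
      Tendsto φ atTop (nhds 1) ∧
      (∀ ψ ψ' : ℝ → ℝ,
        (∀ y ∈ Ici (0:ℝ), HasDerivAt ψ (ψ' y) y) →
        (∀ y ∈ Ici (0:ℝ), HasDerivAt ψ' (-f (ψ y)) y) →
        ϱ * ψ' 0 = ψ 0 → (∃ y ∈ Ici (0:ℝ), ψ y ≠ 0) →
        (∃ M, ∀ y ∈ Ici (0:ℝ), |ψ y| ≤ M) →
        ∀ y ∈ Ici (0:ℝ), ψ y = φ y) :=
  stmt9_general f hf hf0 hf1 hfpos hfout b hderiv1 ϱ hϱ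
end

section
/- Let f be continuous with f(1) = 0 and f > 0 on (a,1) for some a < 1, and define F(s) = ∫_0^s f(r) dr. Suppose φ_L : [0,L] → [0,1] are solutions of φ_L'' + f(φ_L) = 0 with φ_L(0) = φ_L(L) = 0 such that φ_L → 1 and φ_L' → 0 uniformly on [εL, (1−ε)L] for every ε ∈ (0,1/2) as L → ∞, with |φ_L'| uniformly bounded. If F(1) > 0, then the energy H(φ_L) = ∫_0^L (|φ_L'|² − 2F(φ_L)) dy satisfies H(φ_L) → −∞ as L → ∞; in particular H(φ_L) < 0 = H(0) for all large L. -/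
open Set Filter

/-- Auxiliary: bound an interval integral by a constant bound on the integrand. -/
lemma integral_le_const_aux {g : ℝ → ℝ} {c d B : ℝ} (hcd : c ≤ d)
    (hg : IntervalIntegrable g MeasureTheory.volume c d)
    (hB : ∀ y ∈ Icc c d, g y ≤ B) :
    (∫ y in c..d, g y) ≤ (d - c) * B := by
  have h := intervalIntegral.integral_mono_on hcd hg (intervalIntegrable_const (c := B)) hB
  simpa [intervalIntegral.integral_const, smul_eq_mul] using h

theorem stmt12 (f : ℝ → ℝ) (a : ℝ) (ha : a < 1) (hf : Continuous f) (hf1 : f 1 = 0)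
    (hfpos : ∀ s ∈ Ioo a 1, 0 < f s)
    (F : ℝ → ℝ) (hF : ∀ s, F s = ∫ r in (0:ℝ)..s, f r) (hF1 : 0 < F 1)
    (φ φ' : ℝ → ℝ → ℝ)
    (hsol : ∀ L > (0:ℝ), ∀ y ∈ Icc (0:ℝ) L,
      φ L y ∈ Icc (0:ℝ) 1 ∧ HasDerivAt (φ L) (φ' L y) y ∧
        HasDerivAt (φ' L) (-f (φ L y)) y)
    (hbc : ∀ L > (0:ℝ), φ L 0 = 0 ∧ φ L L = 0)
    (hconv : ∀ ε ∈ Ioo (0:ℝ) (1/2), ∀ η > (0:ℝ), ∃ L₀ : ℝ, ∀ L ≥ L₀,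
      ∀ y ∈ Icc (ε * L) ((1 - ε) * L), |φ L y - 1| ≤ η ∧ |φ' L y| ≤ η)
    (hub : ∃ C : ℝ, ∀ L > (0:ℝ), ∀ y ∈ Icc (0:ℝ) L, |φ' L y| ≤ C) :
    Tendsto (fun L => ∫ y in (0:ℝ)..L, ((φ' L y) ^ 2 - 2 * F (φ L y))) atTop atBot ∧
    ∀ᶠ L in atTop, (∫ y in (0:ℝ)..L, ((φ' L y) ^ 2 - 2 * F (φ L y))) < 0 := by
  obtain ⟨C, hC⟩ := hub
  -- F is continuous
  have hFc : Continuous F := by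
    have : Continuous (fun s => ∫ r in (0:ℝ)..s, f r) :=
      intervalIntegral.continuous_primitive (fun a b => hf.intervalIntegrable a b) 0
    have hfeq : F = fun s => ∫ r in (0:ℝ)..s, f r := funext hF
    rw [hfeq]; exact this
  -- bound for F on [0,1]
  obtain ⟨M, hM⟩ := (isCompact_Icc (a := (0:ℝ)) (b := 1)).exists_bound_of_continuousOn
    hFc.continuousOn
  have hM0 : 0 ≤ M := le_trans (norm_nonneg _) (hM 0 (by norm_num))
  have hC0 : 0 ≤ C := le_trans (abs_nonneg _) (hC 1 one_pos 0 (by norm_num))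
  set K : ℝ := C ^ 2 + 2 * M with hK
  have hK0 : 0 ≤ K := by positivity
  -- continuity of F at 1: choose δ
  obtain ⟨δ, hδ0, hδ⟩ := Metric.continuous_iff.mp hFc 1 (F 1 / 4) (by linarith)
  -- choose η
  obtain ⟨η, hη0, hη2, hηδ⟩ : ∃ η : ℝ, 0 < η ∧ η ^ 2 ≤ F 1 / 2 ∧ η < δ := by
    refine ⟨min (δ / 2) (Real.sqrt (F 1 / 2)), lt_min (by linarith)
      (Real.sqrt_pos.mpr (by linarith)), ?_, lt_of_le_of_lt (min_le_left _ _) (by linarith)⟩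
    have h1 : min (δ / 2) (Real.sqrt (F 1 / 2)) ≤ Real.sqrt (F 1 / 2) := min_le_right _ _
    have h0 : 0 ≤ min (δ / 2) (Real.sqrt (F 1 / 2)) :=
      le_min (by linarith) (Real.sqrt_nonneg _)
    have := Real.sq_sqrt (by linarith : (0:ℝ) ≤ F 1 / 2)
    nlinarith
  -- choose ε
  obtain ⟨ε, hε0, hε4, hεK⟩ : ∃ ε : ℝ, 0 < ε ∧ ε ≤ 1/4 ∧ ε * (K + F 1) ≤ F 1 / 4 := by
    have hKF1 : 0 < K + F 1 + 1 := by linarith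
    refine ⟨min (1/4) (F 1 / (4 * (K + F 1 + 1))), lt_min (by norm_num) (by positivity),
      min_le_left _ _, ?_⟩
    have h1 : min (1/4) (F 1 / (4 * (K + F 1 + 1))) ≤ F 1 / (4 * (K + F 1 + 1)) :=
      min_le_right _ _
    have h0 : 0 < min (1/4) (F 1 / (4 * (K + F 1 + 1))) := lt_min (by norm_num) (by positivity)
    have h2 : min (1/4) (F 1 / (4 * (K + F 1 + 1))) * (4 * (K + F 1 + 1)) ≤ F 1 :=
      (le_div_iff₀ (by positivity)).mp h1
    nlinarith
  clear_value K
  obtain ⟨L₀, hL₀⟩ := hconv ε ⟨hε0, lt_of_le_of_lt hε4 (by norm_num)⟩ η hη0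
  -- the main estimate
  have main : ∀ L ≥ max L₀ 1,
      (∫ y in (0:ℝ)..L, ((φ' L y) ^ 2 - 2 * F (φ L y))) ≤ -(F 1 / 2) * L := by
    intro L hL
    have hL1 : (1:ℝ) ≤ L := le_trans (le_max_right _ _) hL
    have hLpos : (0:ℝ) < L := lt_of_lt_of_le one_pos hL1
    have hLL₀ : L₀ ≤ L := le_trans (le_max_left _ _) hL
    -- ordering of split points
    have h1 : (0:ℝ) ≤ ε * L := by positivity
    have h2 : ε * L ≤ (1 - ε) * L := by nlinarith
    have h3 : (1 - ε) * L ≤ L := by nlinarith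
    set g : ℝ → ℝ := fun y => (φ' L y) ^ 2 - 2 * F (φ L y) with hg
    have hgc : ContinuousOn g (Icc 0 L) := by
      intro y hy
      obtain ⟨_, hd1, hd2⟩ := hsol L hLpos y hy
      have hφc : ContinuousAt (φ L) y := hd1.differentiableAt.continuousAt
      have hφ'c : ContinuousAt (φ' L) y := hd2.differentiableAt.continuousAt
      have h2F : ContinuousAt (fun y => 2 * F (φ L y)) y :=
        ((continuous_const.mul hFc).continuousAt).comp hφc
      exact ((hφ'c.pow 2).sub h2F).continuousWithinAt
    have hint : ∀ c d : ℝ, 0 ≤ c → c ≤ d → d ≤ L →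
        IntervalIntegrable g MeasureTheory.volume c d := by
      intro c d hc hcd hdL
      apply (hgc.mono ?_).intervalIntegrable
      rw [uIcc_of_le hcd]
      exact Icc_subset_Icc hc hdL
    -- split the integral
    have hsplit : (∫ y in (0:ℝ)..L, g y) =
        (∫ y in (0:ℝ)..(ε*L), g y) + (∫ y in (ε*L)..((1-ε)*L), g y)
          + (∫ y in ((1-ε)*L)..L, g y) := by
      rw [intervalIntegral.integral_add_adjacent_intervals
            (hint 0 (ε*L) le_rfl h1 (le_trans h2 h3))
            (hint (ε*L) ((1-ε)*L) h1 h2 h3),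
          intervalIntegral.integral_add_adjacent_intervals
            (hint 0 ((1-ε)*L) le_rfl (le_trans h1 h2) h3)
            (hint ((1-ε)*L) L (le_trans h1 h2) h3 le_rfl)]
    -- global pointwise bound
    have hglob : ∀ y ∈ Icc (0:ℝ) L, g y ≤ K := by
      intro y hy
      obtain ⟨hmem, _, _⟩ := hsol L hLpos y hy
      have hb1 : (φ' L y) ^ 2 ≤ C ^ 2 := by
        have h := abs_le.mp (hC L hLpos y hy)
        exact sq_le_sq' h.1 h.2
      have hb2 : |F (φ L y)| ≤ M := by
        have := hM (φ L y) hmem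
        simpa [Real.norm_eq_abs] using this
      have := abs_le.mp hb2
      simp only [hg, hK]
      linarith [this.1]
    -- middle pointwise bound
    have hmid : ∀ y ∈ Icc (ε*L) ((1-ε)*L), g y ≤ -(F 1) := by
      intro y hy
      obtain ⟨hφ1, hφ'⟩ := hL₀ L hLL₀ y hy
      have hFφ : |F (φ L y) - F 1| < F 1 / 4 := by
        have := hδ (φ L y) (by
          rw [Real.dist_eq]; exact lt_of_le_of_lt hφ1 hηδ)
        rwa [Real.dist_eq] at this
      have hb1 : (φ' L y) ^ 2 ≤ η ^ 2 := by
        have h := abs_le.mp hφ'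
        exact sq_le_sq' h.1 h.2
      have h2 := abs_lt.mp hFφ
      simp only [hg]
      linarith [h2.1, hb1, hη2]
    -- estimate each piece
    have e1 : (∫ y in (0:ℝ)..(ε*L), g y) ≤ ε * L * K := by
      have := integral_le_const_aux h1 (hint 0 (ε*L) le_rfl h1 (le_trans h2 h3))
        (fun y hy => hglob y ⟨hy.1, le_trans hy.2 (le_trans h2 h3)⟩)
      simpa using this
    have e2 : (∫ y in (ε*L)..((1-ε)*L), g y) ≤ ((1-ε)*L - ε*L) * (-(F 1)) :=
      integral_le_const_aux h2 (hint (ε*L) ((1-ε)*L) h1 h2 h3) hmid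
    have e3 : (∫ y in ((1-ε)*L)..L, g y) ≤ (L - (1-ε)*L) * K := by
      exact integral_le_const_aux h3 (hint ((1-ε)*L) L (le_trans h1 h2) h3 le_rfl)
        (fun y hy => hglob y ⟨le_trans (le_trans h1 h2) hy.1, hy.2⟩)
    rw [show (∫ y in (0:ℝ)..L, ((φ' L y) ^ 2 - 2 * F (φ L y))) = ∫ y in (0:ℝ)..L, g y from rfl,
      hsplit]
    have key : ε * L * K + ((1-ε)*L - ε*L) * (-(F 1)) + (L - (1-ε)*L) * K ≤ -(F 1 / 2) * L := by
      have h4 : ε * (K + F 1) * L ≤ F 1 / 4 * L := by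
        exact mul_le_mul_of_nonneg_right hεK (by positivity)
      nlinarith
    linarith
  constructor
  · apply tendsto_atBot_mono' atTop ?_ ?_
    · exact fun L => -(F 1 / 2) * L
    · filter_upwards [eventually_ge_atTop (max L₀ 1)] with L hL using main L hL
    · exact tendsto_id.const_mul_atTop_of_neg (by linarith)
  · have h1 : Tendsto (fun L => -(F 1 / 2) * L) atTop atBot :=
      tendsto_id.const_mul_atTop_of_neg (by linarith)
    have h2 : ∀ᶠ L in atTop, -(F 1 / 2) * L < 0 := h1.eventually (eventually_lt_atBot 0)
    filter_upwards [eventually_ge_atTop (max L₀ 1), h2] with L hL hL2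
    exact lt_of_le_of_lt (main L hL) hL2
end

section
/- Let f be continuous with f(s) < 0 for s ∈ (0,θ) and f(s) > 0 for s ∈ (θ,1), f(0) = 0. Define F(s) = ∫_0^s f(r) dr and suppose f'(0⁺) < 0, so F(s) ~ −(|f'(0)|/2)s² as s → 0⁺. Then for the integral I(α) = ∫_0^{θ} ds/√(α² − 2F(s)) (with α > 0), one has I(α) → +∞ as α → 0⁺. -/
open Set Filter

theorem stmt19 (f : ℝ → ℝ) (θ : ℝ) (hθ : θ ∈ Ioo (0:ℝ) 1)
    (hf : Continuous f) (hf0 : f 0 = 0)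
    (hneg : ∀ s ∈ Ioo 0 θ, f s < 0) (hpos : ∀ s ∈ Ioo θ 1, 0 < f s)
    (a : ℝ) (ha : a < 0) (hderiv : HasDerivWithinAt f a (Ici 0) 0) :
    Tendsto
      (fun α : ℝ => ∫ s in (0:ℝ)..θ, 1 / Real.sqrt (α ^ 2 - 2 * ∫ r in (0:ℝ)..s, f r))
      (nhdsWithin 0 (Ioi 0)) atTop := by
  obtain ⟨hθ0, hθ1⟩ := hθ
  set F : ℝ → ℝ := fun s => ∫ r in (0:ℝ)..s, f r with hFdef
  have hFcont : Continuous F :=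
    intervalIntegral.continuous_primitive (fun a b => hf.intervalIntegrable a b) 0
  -- f ≤ 0 on [0,θ]
  have hfle : ∀ r ∈ Icc (0:ℝ) θ, f r ≤ 0 := by
    intro r hr
    have hcl : Icc (0:ℝ) θ = closure (Ioo 0 θ) := (closure_Ioo hθ0.ne).symm
    have hsub : Icc (0:ℝ) θ ⊆ {x | f x ≤ 0} := by
      rw [hcl]
      exact closure_minimal (fun x hx => (hneg x hx).le) (isClosed_le hf continuous_const)
    exact hsub hr
  -- F ≤ 0 on [0,θ]
  have hFle : ∀ s ∈ Icc (0:ℝ) θ, F s ≤ 0 := by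
    intro s hs
    have h1 : (∫ r in (0:ℝ)..s, f r) ≤ ∫ r in (0:ℝ)..s, (0:ℝ) := by
      apply intervalIntegral.integral_mono_on hs.1 (hf.intervalIntegrable _ _)
        intervalIntegrable_const
      intro r hr; exact hfle r ⟨hr.1, hr.2.trans hs.2⟩
    simpa using h1
  -- slope bound near 0
  have hslope : Tendsto (slope f 0) (nhdsWithin 0 (Ioi 0)) (nhds a) := by
    have h := hasDerivWithinAt_iff_tendsto_slope.mp hderiv
    rwa [show (Ici (0:ℝ)) \ {0} = Ioi 0 from Ici_sdiff_left] at h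
  have hev : ∀ᶠ s in nhdsWithin 0 (Ioi 0), 2*a < slope f 0 s :=
    hslope.eventually (eventually_gt_nhds (by linarith))
  obtain ⟨δ, hδ0, hδ⟩ : ∃ δ > 0, ∀ s ∈ Ioc (0:ℝ) δ, 2*a < slope f 0 s := by
    rcases mem_nhdsGT_iff_exists_Ioc_subset.mp hev with ⟨u, hu, hsub⟩
    exact ⟨u, hu, fun s hs => hsub hs⟩
  set δ₀ : ℝ := min δ θ with hδ₀def
  have hδ₀0 : 0 < δ₀ := lt_min hδ0 hθ0
  have hδ₀θ : δ₀ ≤ θ := min_le_right _ _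
  -- f s ≥ 2 a s on [0, δ₀]
  have hflb : ∀ s ∈ Icc (0:ℝ) δ₀, 2*a*s ≤ f s := by
    intro s hs
    rcases eq_or_lt_of_le hs.1 with h0 | h0
    · simp [← h0, hf0]
    · have h1 := hδ s ⟨h0, hs.2.trans (min_le_left _ _)⟩
      have hsl : slope f 0 s = f s / s := by
        simp [slope_def_field, hf0]
      rw [hsl] at h1
      exact ((lt_div_iff₀ h0).mp h1).le
  -- F s ≥ a s² on [0, δ₀]
  have hFlb : ∀ s ∈ Icc (0:ℝ) δ₀, a * s^2 ≤ F s := by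
    intro s hs
    have h1 : (∫ r in (0:ℝ)..s, 2*a*r) ≤ ∫ r in (0:ℝ)..s, f r := by
      apply intervalIntegral.integral_mono_on hs.1
      · exact ((continuous_const.mul continuous_id).intervalIntegrable _ _)
      · exact hf.intervalIntegrable _ _
      · intro r hr; exact hflb r ⟨hr.1, hr.2.trans hs.2⟩
    calc a * s^2 = ∫ r in (0:ℝ)..s, 2*a*r := by
          rw [intervalIntegral.integral_const_mul, integral_id]; ring
      _ ≤ F s := h1
  set K : ℝ := 1 - 2*a with hKdef
  have hK0 : 0 < K := by simp only [hKdef]; linarith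
  have hsqK : 0 < Real.sqrt K := Real.sqrt_pos.mpr hK0
  -- continuity of integrands
  have hgcont : ∀ α : ℝ, 0 < α →
      ContinuousOn (fun s => 1 / Real.sqrt (α^2 - 2*F s)) (Icc 0 θ) := by
    intro α hα
    apply ContinuousOn.div continuousOn_const
    · exact (Real.continuous_sqrt.comp (by continuity)).continuousOn
    · intro s hs
      have hpos' : 0 < α^2 - 2*F s := by nlinarith [hFle s hs]
      exact (Real.sqrt_pos.mpr hpos').ne'
  -- key lower bound
  have key : ∀ α ∈ Ioo (0:ℝ) δ₀,
      (Real.sqrt K)⁻¹ * (Real.log δ₀ - Real.log α)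
        ≤ ∫ s in (0:ℝ)..θ, 1 / Real.sqrt (α^2 - 2*F s) := by
    intro α hα
    obtain ⟨hα0, hαδ⟩ := hα
    have hαδ' : α ≤ δ₀ := hαδ.le
    have hgiθ : IntervalIntegrable (fun s => 1 / Real.sqrt (α^2 - 2*F s))
        MeasureTheory.volume 0 θ :=
      ContinuousOn.intervalIntegrable (by rw [uIcc_of_le hθ0.le]; exact hgcont α hα0)
    have hgi : IntervalIntegrable (fun s => 1 / Real.sqrt (α^2 - 2*F s))
        MeasureTheory.volume α δ₀ :=
      ContinuousOn.intervalIntegrable (by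
        rw [uIcc_of_le hαδ']
        exact (hgcont α hα0).mono (Icc_subset_Icc hα0.le hδ₀θ))
    have hli : IntervalIntegrable (fun s : ℝ => (Real.sqrt K)⁻¹ * (1/s))
        MeasureTheory.volume α δ₀ := by
      apply ContinuousOn.intervalIntegrable
      apply continuousOn_const.mul
      apply continuousOn_const.div continuousOn_id
      intro s hs
      rw [uIcc_of_le hαδ'] at hs
      exact (lt_of_lt_of_le hα0 hs.1).ne'
    have step1 : (∫ s in α..δ₀, (Real.sqrt K)⁻¹ * (1/s))
        ≤ ∫ s in α..δ₀, 1 / Real.sqrt (α^2 - 2*F s) := by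
      apply intervalIntegral.integral_mono_on hαδ' hli hgi
      intro s hs
      have hs0 : 0 < s := lt_of_lt_of_le hα0 hs.1
      have hsθ : s ∈ Icc (0:ℝ) θ := ⟨hs0.le, hs.2.trans hδ₀θ⟩
      have hX : 0 < α^2 - 2*F s := by nlinarith [hFle s hsθ]
      have hXK : α^2 - 2*F s ≤ K * s^2 := by
        have h1 := hFlb s ⟨hs0.le, hs.2⟩
        have h2 : α^2 ≤ s^2 := by nlinarith [hs.1]
        simp only [hKdef]; nlinarith
      have hsq : Real.sqrt (α^2 - 2*F s) ≤ Real.sqrt K * s := by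
        calc Real.sqrt (α^2 - 2*F s) ≤ Real.sqrt (K * s^2) := Real.sqrt_le_sqrt hXK
          _ = Real.sqrt K * s := by
              rw [Real.sqrt_mul hK0.le, Real.sqrt_sq hs0.le]
      have := one_div_le_one_div_of_le (Real.sqrt_pos.mpr hX) hsq
      calc (Real.sqrt K)⁻¹ * (1/s) = 1 / (Real.sqrt K * s) := by
            field_simp
        _ ≤ 1 / Real.sqrt (α^2 - 2*F s) := this
    have step2 : (∫ s in α..δ₀, 1 / Real.sqrt (α^2 - 2*F s))
        ≤ ∫ s in (0:ℝ)..θ, 1 / Real.sqrt (α^2 - 2*F s) := by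
      apply intervalIntegral.integral_mono_interval hα0.le hαδ' hδ₀θ
      · filter_upwards with s
        positivity
      · exact hgiθ
    have hcomp : (∫ s in α..δ₀, (Real.sqrt K)⁻¹ * (1/s))
        = (Real.sqrt K)⁻¹ * (Real.log δ₀ - Real.log α) := by
      rw [intervalIntegral.integral_const_mul, integral_one_div, Real.log_div hδ₀0.ne' hα0.ne']
      rw [uIcc_of_le hαδ']
      intro h
      exact absurd h.1 (not_le.mpr hα0)
    rw [← hcomp]
    exact step1.trans step2
  -- conclude
  have hmem : Ioo (0:ℝ) δ₀ ∈ nhdsWithin (0:ℝ) (Ioi 0) :=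
    Ioo_mem_nhdsGT_of_mem ⟨le_refl 0, hδ₀0⟩
  have hφ : Tendsto (fun α : ℝ => (Real.sqrt K)⁻¹ * (Real.log δ₀ - Real.log α))
      (nhdsWithin 0 (Ioi 0)) atTop := by
    have hlog : Tendsto Real.log (nhdsWithin 0 (Ioi 0)) atBot :=
      Real.tendsto_log_nhdsGT_zero
    have hneg' : Tendsto (fun α : ℝ => -Real.log α) (nhdsWithin 0 (Ioi 0)) atTop :=
      tendsto_neg_atBot_atTop.comp hlog
    have hd : Tendsto (fun α : ℝ => Real.log δ₀ - Real.log α) (nhdsWithin 0 (Ioi 0)) atTop := by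
      simp only [sub_eq_add_neg]
      exact tendsto_atTop_add_const_left _ _ hneg'
    exact hd.const_mul_atTop (inv_pos.mpr hsqK)
  apply tendsto_atTop_mono' _ _ hφ
  filter_upwards [hmem] with α hα
  have := key α hα
  simpa [hFdef, pow_two] using this
end
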